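/- arXiv:1411.4699 — 2 statements merged into one kernel-verified Lean document; each statement's English description precedes it below -/
import Mathlib

section
/- Let U be an integral, Noetherian, normal scheme (i.e., an irreducible and reduced Noetherian scheme all of whose local rings are integrally closed domains). Let U₀ ⊆ U be an open subscheme such that every point of U ∖ U₀ has local ring of Krull dimension at least 2 (the complement of U₀ has codimension ≥ 2 in U). Let g : J → U be an affine morphism of schemes with J integral, and suppose there is an open immersion ι : U₀ → J with topologically dense image such that the composite g ∘ ι equals the open immersion U₀ ↪ U. Then g is an isomorphism of schemes. -/
/-!
For an affine open `V ⊆ U`, the map `(ι ≫ g).app V = U₀.ι.app V` is the restriction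
`Γ(U, V) → Γ(U, V ∩ U₀)`. It is bijective by algebraic Hartogs: a Noetherian domain whose
localizations are normal is the intersection of its localizations at primes of height `≤ 1`,
and the points of `V` of codimension `≤ 1` all lie in `U₀`. Since `J` is integral, `ι.app` is
injective, hence `g.app V` is bijective, and an affine morphism with this property is an
isomorphism.
-/

open AlgebraicGeometry CategoryTheory

section CommutativeAlgebra

open IsLocalRing

theorem IsLocalRing.ringKrullDim_le_one_of_isPrincipal_maximalIdeal {R : Type*} [CommRing R]
    [IsNoetherianRing R] [IsLocalRing R] [(maximalIdeal R).IsPrincipal] :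
    ringKrullDim R ≤ 1 := by
  rw [← maximalIdeal_height_eq_ringKrullDim]
  exact_mod_cast Ideal.height_le_one_of_isPrincipal_of_mem_minimalPrimes_of_isLocalRing _
    ⟨⟨inferInstance, le_rfl⟩, fun _ hq _ => hq.2⟩

theorem IsLocalRing.isPrincipal_maximalIdeal_of_mul_mem_span {R : Type*} [CommRing R] [IsDomain R]
    [IsNoetherianRing R] [IsLocalRing R] [IsIntegrallyClosed R] {a e : R}
    (he : e ∉ Ideal.span {a}) (hm : ∀ u ∈ maximalIdeal R, u * e ∈ Ideal.span {a}) :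
    (maximalIdeal R).IsPrincipal := by
  by_cases hbot : maximalIdeal R = ⊥
  · rw [hbot]; infer_instance
  have ha : a ≠ 0 := by
    rintro rfl
    refine hbot (eq_bot_iff.mpr fun u hu => ?_)
    have := hm u hu
    rw [Ideal.span_singleton_eq_bot.mpr rfl, Ideal.mem_bot, mul_eq_zero] at this
    exact this.resolve_right fun h => he (by rw [h]; exact zero_mem _)
  choose! d hd using fun u hu => Ideal.mem_span_singleton'.mp (hm u hu)
  -- Either `(e / a) • m` contains a unit, and then `m` is principal, or `(e / a) • m ⊆ m`,
  -- and then `e / a` is integral, hence in `R`.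
  by_cases hunit : ∃ u ∈ maximalIdeal R, IsUnit (d u)
  · obtain ⟨u, hu, hdu⟩ := hunit
    refine ⟨u, le_antisymm (fun w hw => ?_) ((Ideal.span_singleton_le_iff_mem _).mpr hu)⟩
    refine Ideal.mem_span_singleton'.mpr ⟨d w * ↑hdu.unit⁻¹, ?_⟩
    have : d w * u = w * d u :=
      mul_left_cancel₀ ha (by linear_combination u * hd w hw - w * hd u hu)
    rw [mul_right_comm, this, mul_assoc, hdu.mul_val_inv, mul_one]
  · push Not at hunit
    let K := FractionRing R
    let t : K := algebraMap R K e / algebraMap R K a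
    have ha' : algebraMap R K a ≠ 0 := (map_ne_zero_iff _ (IsFractionRing.injective R K)).mpr ha
    let M : Submodule R K := Submodule.map (Algebra.linearMap R K) (maximalIdeal R)
    have htM : ∀ x ∈ M, t * x ∈ M := by
      intro x hx
      obtain ⟨u, hu, rfl⟩ := Submodule.mem_map.mp hx
      refine Submodule.mem_map.mpr ⟨d u, (mem_maximalIdeal _).mpr (hunit u hu), ?_⟩
      simp only [Algebra.linearMap_apply, t]
      rw [div_mul_eq_mul_div, eq_div_iff ha', ← map_mul, ← map_mul, mul_comm e, ← hd u hu]
    have hM : M ≠ ⊥ := by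
      obtain ⟨u, hu, hu0⟩ := Submodule.exists_mem_ne_zero_of_ne_bot hbot
      refine fun h => hu0 (IsFractionRing.injective R K ?_)
      have : algebraMap R K u ∈ M := Submodule.mem_map_of_mem hu
      rwa [h, Submodule.mem_bot, ← map_zero (algebraMap R K)] at this
    obtain ⟨w, hw⟩ := IsIntegrallyClosed.algebraMap_eq_of_integral
      (isIntegral_of_smul_mem_submodule M hM ((IsNoetherian.noetherian _).map _) t htM)
    refine absurd (Ideal.mem_span_singleton'.mpr ⟨w, IsFractionRing.injective R K ?_⟩) he
    rw [map_mul, hw, div_mul_cancel₀ _ ha']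

open IsLocalization in
theorem Ideal.height_le_one_of_forall_mem_iff_mul_mem_span {A : Type*} [CommRing A] [IsDomain A]
    [IsNoetherianRing A] {P : Ideal A} [P.IsPrime]
    [IsIntegrallyClosed (Localization.AtPrime P)] {a e : A}
    (hP : ∀ s, s ∈ P ↔ s * e ∈ Ideal.span {a}) : P.height ≤ 1 := by
  let f := algebraMap A (Localization.AtPrime P)
  have he : f e ∉ Ideal.span {f a} := by
    intro h
    obtain ⟨r, hr⟩ := Ideal.mem_span_singleton'.mp h
    obtain ⟨⟨d, σ⟩, rfl⟩ := mk'_surjective P.primeCompl r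
    refine σ.2 ((hP σ).mpr (Ideal.mem_span_singleton'.mpr
      ⟨d, IsLocalization.injective (Localization.AtPrime P)
        P.primeCompl_le_nonZeroDivisors ?_⟩))
    rw [map_mul, map_mul, ← mk'_spec' _ d σ, mul_assoc, hr]
  have hm : ∀ v ∈ maximalIdeal _, v * f e ∈ Ideal.span {f a} := by
    intro v hv
    obtain ⟨⟨s, σ⟩, rfl⟩ := mk'_surjective P.primeCompl v
    obtain ⟨d, hd⟩ := Ideal.mem_span_singleton'.mp
      ((hP s).mp ((AtPrime.mk'_mem_maximal_iff _ P s σ).mp hv))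
    refine Ideal.mem_span_singleton'.mpr ⟨mk' _ d σ, ?_⟩
    dsimp only
    rw [mul_comm, mul_mk'_eq_mk'_of_mul, mul_comm (mk' _ s σ), mul_mk'_eq_mk'_of_mul, mul_comm a,
      hd, mul_comm]
  have := IsLocalRing.isPrincipal_maximalIdeal_of_mul_mem_span he hm
  have := IsLocalRing.ringKrullDim_le_one_of_isPrincipal_maximalIdeal (R := Localization.AtPrime P)
  rw [AtPrime.ringKrullDim_eq_height P] at this
  exact_mod_cast this

theorem mem_bot_of_mem_localization_of_height_le_one {A K : Type*} [CommRing A] [IsDomain A]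
    [IsNoetherianRing A] [Field K] [Algebra A K] [IsFractionRing A K]
    (hnormal : ∀ P : PrimeSpectrum A, IsIntegrallyClosed (Localization.AtPrime P.asIdeal)) {b : K}
    (hb : ∀ P : PrimeSpectrum A, P.asIdeal.height ≤ 1 →
      b ∈ Localization.subalgebra.ofField K P.asIdeal.primeCompl
        P.asIdeal.primeCompl_le_nonZeroDivisors) :
    b ∈ (⊥ : Subalgebra A K) := by
  by_contra hbA
  obtain ⟨⟨c, a⟩, hca⟩ := IsLocalization.surj (nonZeroDivisors A) b
  have ha : algebraMap A K a ≠ 0 := IsFractionRing.to_map_ne_zero_of_mem_nonZeroDivisors a.2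
  have hc : Ideal.Quotient.mk (Ideal.span {(a : A)}) c ≠ 0 := by
    refine fun h => hbA (Algebra.mem_bot.mpr ?_)
    obtain ⟨d, hd⟩ := Ideal.mem_span_singleton'.mp (Ideal.Quotient.eq_zero_iff_mem.mp h)
    refine ⟨d, mul_right_cancel₀ ha ?_⟩
    rw [← map_mul, hd, ← hca]
  -- With `b = c / a`, an associated prime `P = ((a) : e) ⊇ ((a) : c)` of `A ⧸ (a)` has height
  -- at most one as `A_P` is normal, yet `b ∉ A_P`.
  obtain ⟨P, hP, hcP⟩ := exists_le_isAssociatedPrime_of_isNoetherianRing A _ hc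
  obtain ⟨hPprime, e', rfl⟩ := isAssociatedPrime_iff.mp hP
  obtain ⟨e, rfl⟩ := Ideal.Quotient.mk_surjective e'
  have hmem : ∀ x s : A, s ∈ (⊥ : Submodule A (A ⧸ Ideal.span {(a : A)})).colon
      {Ideal.Quotient.mk _ x} ↔ s * x ∈ Ideal.span {(a : A)} := fun x s => by
    rw [Submodule.mem_colon_singleton, Submodule.mem_bot, ← Ideal.Quotient.eq_zero_iff_mem]
    rfl
  have := hnormal ⟨_, hPprime⟩
  obtain ⟨d, s, hs, hb'⟩ := hb ⟨_, hPprime⟩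
    (Ideal.height_le_one_of_forall_mem_iff_mul_mem_span (hmem e))
  refine hs (hcP ((hmem c s).mpr
    (Ideal.mem_span_singleton'.mpr ⟨d, IsFractionRing.injective A K ?_⟩)))
  have hs0 : algebraMap A K s ≠ 0 :=
    IsFractionRing.to_map_ne_zero_of_mem_nonZeroDivisors (Ideal.primeCompl_le_nonZeroDivisors _ hs)
  rw [map_mul, map_mul, ← hca, hb']
  field_simp

theorem Localization.subalgebra.algebraMap_mem_ofField {A K R : Type*} [CommRing A] [IsDomain A]
    [Field K] [Algebra A K] [IsFractionRing A K] {S : Submonoid A} (hS : S ≤ nonZeroDivisors A)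
    [CommRing R] [Algebra A R] [IsLocalization S R] [Algebra R K] [IsScalarTower A R K] (r : R) :
    algebraMap R K r ∈ ofField K S hS := by
  obtain ⟨⟨x, s⟩, rfl⟩ := IsLocalization.mk'_surjective S r
  have hs : algebraMap A K s ≠ 0 := IsFractionRing.to_map_ne_zero_of_mem_nonZeroDivisors (hS s.2)
  refine ⟨x, s, s.2, (eq_mul_inv_iff_mul_eq₀ hs).mpr ?_⟩
  rw [IsScalarTower.algebraMap_apply A R K, IsScalarTower.algebraMap_apply A R K x, ← map_mul,
    IsLocalization.mk'_spec]

end CommutativeAlgebra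

theorem AlgebraicGeometry.IsAffineOpen.primeIdealOf_surjective {X : Scheme} {V : X.Opens}
    (hV : IsAffineOpen V) : Function.Surjective hV.primeIdealOf :=
  hV.isoSpec.hom.surjective

theorem AlgebraicGeometry.IsAffineOpen.bijective_presheaf_map_of_two_le_ringKrullDim
    {X : Scheme} [IsIntegral X] {V W : X.Opens} (hV : IsAffineOpen V) [IsNoetherianRing Γ(X, V)]
    (hWV : W ≤ V) [Nonempty W]
    (hnormal : ∀ x ∈ V, IsIntegrallyClosed (X.presheaf.stalk x))
    (hcodim : ∀ x ∈ V, x ∉ W → 2 ≤ ringKrullDim (X.presheaf.stalk x)) :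
    Function.Bijective (X.presheaf.map (homOfLE hWV).op) := by
  have : Nonempty V := ⟨⟨_, hWV (Classical.arbitrary W).2⟩⟩
  have := functionField_isFractionRing_of_isAffineOpen X V hV
  refine ⟨map_injective_of_isIntegral X _, fun s => ?_⟩
  have hs : X.germToFunctionField W s ∈ (⊥ : Subalgebra Γ(X, V) X.functionField) := by
    refine mem_bot_of_mem_localization_of_height_le_one (fun P => ?_) (fun P hP => ?_)
    · obtain ⟨y, rfl⟩ := hV.primeIdealOf_surjective P
      have := hV.isLocalization_stalk y
      have := hnormal y y.2
      exact .of_equiv (IsLocalization.algEquiv (hV.primeIdealOf y).asIdeal.primeCompl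
        (X.presheaf.stalk y) _).toRingEquiv
    · obtain ⟨y, rfl⟩ := hV.primeIdealOf_surjective P
      have := hV.isLocalization_stalk y
      by_cases hyW : (y : X) ∈ W
      · rw [← Scheme.algebraMap_germ_eq_germToFunctionField X hyW]
        exact Localization.subalgebra.algebraMap_mem_ofField _ _
      · have := (hcodim y y.2 hyW).trans_eq
          (IsLocalization.AtPrime.ringKrullDim_eq_height (hV.primeIdealOf y).asIdeal _)
        have h2 : (2 : ℕ∞) ≤ (hV.primeIdealOf y).asIdeal.height :=
          WithBot.coe_le_coe.mp this
        exact absurd (h2.trans hP) (by norm_num)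
  obtain ⟨a, ha⟩ := Algebra.mem_bot.mp hs
  refine ⟨a, X.germToFunctionField_injective W ?_⟩
  rw [← ha]
  exact X.presheaf.germ_res_apply _ _ _ a

theorem AlgebraicGeometry.Scheme.Hom.app_injective_of_isOpenImmersion {X Y : Scheme} [IsIntegral Y]
    (f : X ⟶ Y) [IsOpenImmersion f] (V : Y.Opens) [Nonempty (f ⁻¹ᵁ V)] :
    Function.Injective (f.app V) := by
  obtain ⟨x⟩ := ‹Nonempty (f ⁻¹ᵁ V)›
  have : Nonempty (f ''ᵁ f ⁻¹ᵁ V) := ⟨⟨f x.1, x.1, x.2, rfl⟩⟩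
  have h : Function.Injective (f.app V ≫ (f.appIso (f ⁻¹ᵁ V)).inv) := by
    rw [Scheme.Hom.app_appIso_inv]
    exact map_injective_of_isIntegral Y (U := f ''ᵁ f ⁻¹ᵁ V) _
  exact fun a b hab => h (congrArg (f.appIso _).inv hab)

theorem AlgebraicGeometry.Scheme.Hom.bijective_app_of_bijective_comp_app {X Y Z : Scheme}
    (f : X ⟶ Y) (g : Y ⟶ Z) (V : Z.Opens) (hf : Function.Injective (f.app (g ⁻¹ᵁ V)))
    (hfg : Function.Bijective ((f ≫ g).app V)) : Function.Bijective (g.app V) := by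
  rw [Scheme.Hom.comp_app] at hfg
  refine ⟨fun a b hab => hfg.injective (congrArg (f.app _) hab), fun b => ?_⟩
  obtain ⟨a, ha⟩ := hfg.surjective (f.app _ b)
  exact ⟨a, hf ha⟩

theorem AlgebraicGeometry.isIso_of_forall_isAffineOpen_isIso_app {X Y : Scheme} (f : X ⟶ Y)
    [IsAffineHom f] (H : ∀ V : Y.Opens, IsAffineOpen V → Nonempty V → IsIso (f.app V)) :
    IsIso f := by
  choose V hV hxV _ using fun x : Y =>
    TopologicalSpace.Opens.isBasis_iff_nbhd.mp Y.isBasis_affineOpens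
      (show x ∈ (⊤ : Y.Opens) from trivial)
  refine IsZariskiLocalAtTarget.of_iSup_eq_top (P := MorphismProperty.isomorphisms Scheme) V
    (eq_top_iff.mpr fun x _ => TopologicalSpace.Opens.mem_iSup.mpr ⟨x, hxV x⟩) fun x => ?_
  exact (isIso_morphismRestrict_iff_isIso_app f (hV x)).mpr (H _ (hV x) ⟨⟨x, hxV x⟩⟩)

/-- **Claim in Step 4 of Theorem 5.** Let `U` be an integral Noetherian normal scheme (all
local rings are integrally closed domains), and `U₀ ⊆ U` an open subscheme whose complement
consists of points with local ring of Krull dimension at least `2`.  If `g : J ⟶ U` is an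
affine morphism with `J` integral, and `ι : U₀ ⟶ J` is an open immersion with dense image
such that `ι ≫ g` is the inclusion `U₀ ⟶ U`, then `g` is an isomorphism. -/
theorem affine_birational_isomorphism_over_normal
    (U : Scheme) [IsIntegral U] [AlgebraicGeometry.IsNoetherian U]
    (hnormal : ∀ x : U, IsDomain (U.presheaf.stalk x) ∧
      IsIntegrallyClosed (U.presheaf.stalk x))
    (U₀ : U.Opens)
    (hcodim : ∀ x : U, x ∉ U₀ → 2 ≤ ringKrullDim (U.presheaf.stalk x))
    (J : Scheme) [IsIntegral J]
    (g : J ⟶ U) (hg : IsAffineHom g)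
    (ι : (U₀ : Scheme) ⟶ J) (hι : IsOpenImmersion ι)
    (hdense : Dense (Set.range ι.base))
    (hcomp : ι ≫ g = U₀.ι) :
    IsIso g := by
  obtain ⟨_, x₀, -⟩ := hdense.nonempty
  refine isIso_of_forall_isAffineOpen_isIso_app g fun V hV ⟨y⟩ => ?_
  obtain ⟨x, hxV, hxU₀⟩ :=
    nonempty_preirreducible_inter V.isOpen U₀.isOpen ⟨y.1, y.2⟩ ⟨x₀.1, x₀.2⟩
  have : Nonempty (ι ⁻¹ᵁ g ⁻¹ᵁ V) := by
    change Nonempty ((ι ≫ g) ⁻¹ᵁ V)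
    rw [hcomp]
    exact ⟨⟨⟨x, hxU₀⟩, hxV⟩⟩
  have : Nonempty (U₀.ι ''ᵁ U₀.ι ⁻¹ᵁ V) := ⟨⟨x, ⟨x, hxU₀⟩, hxV, rfl⟩⟩
  have : IsNoetherianRing Γ(U, V) := IsLocallyNoetherian.component_noetherian ⟨V, hV⟩
  -- `U₀.ι.app V` is the restriction `Γ(U, V) ⟶ Γ(U, V ⊓ U₀)`
  have hres : Function.Bijective (U₀.ι.app V) :=
    hV.bijective_presheaf_map_of_two_le_ringKrullDim (W := U₀.ι ''ᵁ U₀.ι ⁻¹ᵁ V) _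
      (fun x _ => (hnormal x).2)
      fun x hxV hxW => hcodim x fun hxU₀ => hxW ⟨⟨x, hxU₀⟩, hxV, rfl⟩
  rw [← hcomp] at hres
  rw [ConcreteCategory.isIso_iff_bijective]
  exact ι.bijective_app_of_bijective_comp_app g V (ι.app_injective_of_isOpenImmersion _) hres
end

section
/- Let p be a prime and let l be an algebraically closed field of characteristic p. Let E be the perfect closure of the formal power series ring l[[T]] (the colimit of l[[T]] along the Frobenius endomorphism, equivalently the union of the rings l[[T^{1/p^v}]] for v ≥ 0), and let ε : E → l be the ring homomorphism induced by the constant-coefficient homomorphism l[[T]] → l (which exists since l is perfect). Let r ≥ 1 and n ≥ 1 be natural numbers, let B be an r×r matrix with entries in E, and let z ∈ E^r satisfy z_i = Σ_{j=1}^{r} B_{ij} · (z_j)^{p^n} for all i. If z ≠ 0, then ε(z_i) ≠ 0 for some i. -/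
/-!
The constant-coefficient map of `l[[T]]` reflects units, and since every element of the perfect
closure has a `p`-power coming from `l[[T]]`, so does `ε`. Hence `ker ε` lies in the Jacobson
radical. If every `z i` lies in `ker ε`, the equation `z i = ∑ j, (B i j * z j ^ (p ^ n - 1)) * z j`
shows that the ideal `I` spanned by the `z i` satisfies `I ≤ (ker ε) • I`, so `I = 0` by Nakayama.
-/

instance powerSeries_charP (p : ℕ) (l : Type) [Field l] [CharP l p] :
    CharP (PowerSeries l) p :=
  charP_of_injective_ringHom (f := PowerSeries.C (R := l)) PowerSeries.C_injective p

instance PowerSeries.isLocalHom_constantCoeff {R : Type*} [CommRing R] :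
    IsLocalHom (PowerSeries.constantCoeff (R := R)) :=
  ⟨fun _ => PowerSeries.isUnit_iff_constantCoeff.mpr⟩

theorem IsPRadical.isLocalHom_of_comp {K L M : Type*} [CommSemiring K] [CommSemiring L]
    [CommSemiring M] {i : K →+* L} {p : ℕ} [NeZero p] [IsPRadical i p] (f : L →+* M)
    [IsLocalHom (f.comp i)] : IsLocalHom f := by
  refine ⟨fun x hx => ?_⟩
  obtain ⟨n, y, hy⟩ := IsPRadical.pow_mem i p x
  have hfy : IsUnit (f.comp i y) := by
    rw [RingHom.comp_apply, hy, map_pow]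
    exact hx.pow _
  have hxpow : IsUnit (x ^ p ^ n) := hy ▸ (IsUnit.of_map _ y hfy).map i
  exact (isUnit_pow_iff (pow_ne_zero n (NeZero.ne p))).mp hxpow

theorem RingHom.ker_le_jacobson_bot {A B : Type*} [CommRing A] [Semiring B] (f : A →+* B)
    [IsLocalHom f] : RingHom.ker f ≤ Ideal.jacobson ⊥ := fun x hx =>
  Ideal.mem_jacobson_bot.mpr fun y => IsUnit.of_map f _ (by simp [(RingHom.mem_ker).mp hx])

theorem eq_zero_of_eq_sum_mul_pow_of_le_jacobson {A ι : Type*} [CommRing A] [Fintype ι]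
    {M : Ideal A} (hM : M ≤ Ideal.jacobson ⊥) {k : ℕ} (hk : 1 < k) (B : ι → ι → A) (z : ι → A)
    (hz : ∀ i, z i = ∑ j, B i j * z j ^ k) (hzM : ∀ i, z i ∈ M) : z = 0 := by
  set I : Ideal A := Ideal.span (Set.range z)
  have hle : I ≤ M • I := by
    refine Ideal.span_le.mpr ?_
    rintro _ ⟨i, rfl⟩
    rw [hz i]
    refine Submodule.sum_mem _ fun j _ => ?_
    have hsplit : B i j * z j ^ k = (B i j * z j ^ (k - 1)) • z j := by
      rw [smul_eq_mul, mul_assoc, ← pow_succ, Nat.sub_add_cancel hk.le]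
    rw [hsplit]
    exact Submodule.smul_mem_smul (M.mul_mem_left _ (M.pow_mem_of_mem (hzM j) _ (by omega)))
      (Ideal.subset_span ⟨j, rfl⟩)
  have hI : I = ⊥ :=
    Submodule.eq_bot_of_le_smul_of_le_jacobson_bot M I (Submodule.fg_span (Set.finite_range z))
      hle hM
  funext i
  have hzi : z i ∈ I := Ideal.subset_span ⟨i, rfl⟩
  rwa [hI, Submodule.mem_bot] at hzi

theorem nonzero_semilinear_fixed_point_nonzero_at_closed_point_general
    (p : ℕ) [Fact p.Prime] (l : Type) [Field l] [CharP l p]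
    (ε : PerfectClosure (PowerSeries l) p →+* l)
    (hε : ε.comp (PerfectClosure.of (PowerSeries l) p) = PowerSeries.constantCoeff (R := l))
    (r n : ℕ) (hn : 1 ≤ n)
    (B : Matrix (Fin r) (Fin r) (PerfectClosure (PowerSeries l) p))
    (z : Fin r → PerfectClosure (PowerSeries l) p)
    (hz : ∀ i, z i = ∑ j, B i j * z j ^ p ^ n)
    (hz0 : z ≠ 0) :
    ∃ i, ε (z i) ≠ 0 := by
  by_contra! hzker
  have : IsLocalHom (ε.comp (PerfectClosure.of (PowerSeries l) p)) := by
    rw [hε]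
    infer_instance
  have : IsLocalHom ε := IsPRadical.isLocalHom_of_comp
    (i := PerfectClosure.of (PowerSeries l) p) (p := p) ε
  have hpow : 1 < p ^ n := Nat.one_lt_pow (by omega) (Fact.out : p.Prime).one_lt
  exact hz0 (eq_zero_of_eq_sum_mul_pow_of_le_jacobson ε.ker_le_jacobson_bot hpow B z hz hzker)

/-- **Subclaim 1 in Step 5 of Theorem 5.** Let `l` be an algebraically closed field of
characteristic `p`, let `E` be the perfect closure of `l[[T]]`, and let `ε : E → l` be the
ring homomorphism induced by the constant-coefficient map `l[[T]] → l`.  If `z ∈ E^r` is a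
nonzero solution of the Frobenius-semilinear fixed point equation
`z_i = Σ_j B_{ij} · z_j^(p^n)` (with `r, n ≥ 1`), then `ε (z_i) ≠ 0` for some `i`. -/
theorem nonzero_semilinear_fixed_point_nonzero_at_closed_point
    (p : ℕ) [Fact p.Prime] (l : Type) [Field l] [IsAlgClosed l] [CharP l p]
    (ε : PerfectClosure (PowerSeries l) p →+* l)
    (hε : ε.comp (PerfectClosure.of (PowerSeries l) p) = PowerSeries.constantCoeff (R := l))
    (r n : ℕ) (hr : 1 ≤ r) (hn : 1 ≤ n)
    (B : Matrix (Fin r) (Fin r) (PerfectClosure (PowerSeries l) p))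
    (z : Fin r → PerfectClosure (PowerSeries l) p)
    (hz : ∀ i, z i = ∑ j, B i j * z j ^ p ^ n)
    (hz0 : z ≠ 0) :
    ∃ i, ε (z i) ≠ 0 :=
  nonzero_semilinear_fixed_point_nonzero_at_closed_point_general p l ε hε r n hn B z hz hz0
end
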